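/- arXiv:2009.09989 — 2 statements merged into one kernel-verified Lean document; each statement's English description precedes it below -/
import Mathlib

section
/- For every finite graph G on n vertices and every graph H with at least 2 vertices, the Italian domination number of the corona G ⊙ H equals 2n. -/
open SimpleGraph Finset
open scoped Classical

/-- An Italian dominating function: values in {0,1,2}, and every vertex with
value 0 has neighbor values summing to at least 2. -/
def IsItalian {V : Type*} [Fintype V] (G : SimpleGraph V) (f : V → ℕ) : Prop :=
  (∀ v, f v ≤ 2) ∧
    ∀ v, f v = 0 → 2 ≤ ∑ u ∈ Finset.univ.filter (fun w => G.Adj v w), f u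

/-- The Italian domination number: minimum weight of an Italian dominating function. -/
noncomputable def italianDomNumber {V : Type*} [Fintype V] (G : SimpleGraph V) : ℕ :=
  sInf {w | ∃ f : V → ℕ, IsItalian G f ∧ ∑ v, f v = w}

/-- The corona `G ⊙ K₁`: attach one pendant vertex (an `inr` copy) to each vertex of `G`. -/
def coronaK1 {V : Type*} (G : SimpleGraph V) : SimpleGraph (V ⊕ V) :=
  SimpleGraph.fromRel (fun a b =>
    match a, b with
    | Sum.inl u, Sum.inl v => G.Adj u v
    | Sum.inl u, Sum.inr v => u = v
    | Sum.inr u, Sum.inl v => u = v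
    | Sum.inr _, Sum.inr _ => False)

/-- The corona `G ⊙ H`: one copy of `H` per vertex of `G`, each joined to that vertex. -/
def corona {V W : Type*} (G : SimpleGraph V) (H : SimpleGraph W) :
    SimpleGraph (V ⊕ V × W) :=
  SimpleGraph.fromRel (fun a b =>
    match a, b with
    | Sum.inl u, Sum.inl v => G.Adj u v
    | Sum.inl u, Sum.inr p => u = p.1
    | Sum.inr p, Sum.inl v => p.1 = v
    | Sum.inr p, Sum.inr q => p.1 = q.1 ∧ H.Adj p.2 q.2)

/-!
Putting `2` on every vertex of `G` and `0` on every copy of `H` is Italian, of weight `2n`.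
Conversely, every block `{v} ∪ ({v} × W)` carries weight at least `2`: if it carried at most `1`,
then, as `|W| ≥ 2`, some vertex of the copy of `H` at `v` would have value `0`, and all of its
neighbours lie in the block.
-/

section Italian

variable {V : Type*} [Fintype V] {G : SimpleGraph V} {f : V → ℕ}

lemma isItalian_const_two (G : SimpleGraph V) : IsItalian G fun _ => 2 :=
  ⟨fun _ => le_rfl, fun _ h => absurd h two_ne_zero⟩

lemma italianDomNumber_le (hf : IsItalian G f) : italianDomNumber G ≤ ∑ v, f v :=
  Nat.sInf_le ⟨f, hf, rfl⟩

lemma exists_isItalian_sum_eq_italianDomNumber (G : SimpleGraph V) :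
    ∃ f, IsItalian G f ∧ ∑ v, f v = italianDomNumber G :=
  Nat.sInf_mem (s := {w | ∃ f : V → ℕ, IsItalian G f ∧ ∑ v, f v = w})
    ⟨_, _, isItalian_const_two G, rfl⟩

lemma IsItalian.two_le_sum_of_adj_mem (hf : IsItalian G f) {x : V} (hx : f x = 0)
    {s : Finset V} (hs : ∀ y, G.Adj x y → y ∈ s) : 2 ≤ ∑ y ∈ s, f y :=
  (hf.2 x hx).trans <| sum_le_sum_of_subset fun y hy => hs y (mem_filter.1 hy).2

end Italian

section Corona

variable {V W : Type*} {G : SimpleGraph V} {H : SimpleGraph W}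

lemma corona_adj_inr_inl (p : V × W) : (corona G H).Adj (.inr p) (.inl p.1) := by
  simp [corona]

lemma corona_adj_inr {p : V × W} {x : V ⊕ V × W} (h : (corona G H).Adj (.inr p) x) :
    x = .inl p.1 ∨ ∃ w, x = .inr (p.1, w) := by
  rw [corona, fromRel_adj] at h
  rcases x with v | ⟨v, w⟩
  · left
    rcases h with ⟨-, h | h⟩ <;> simp_all
  · right
    refine ⟨w, ?_⟩
    rcases h with ⟨-, h | h⟩ <;> simp_all

variable [Fintype W]

noncomputable def coronaBlock (v : V) : Finset (V ⊕ V × W) :=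
  insert (.inl v) (univ.image fun w => .inr (v, w))

lemma sum_coronaBlock (f : V ⊕ V × W → ℕ) (v : V) :
    ∑ x ∈ coronaBlock v, f x = f (.inl v) + ∑ w, f (.inr (v, w)) := by
  rw [coronaBlock, sum_insert (by simp), sum_image fun _ _ _ _ h => by simpa using h]

lemma sum_eq_sum_coronaBlock [Fintype V] (f : V ⊕ V × W → ℕ) :
    ∑ x, f x = ∑ v, ∑ x ∈ coronaBlock v, f x := by
  simp only [sum_coronaBlock, Fintype.sum_sum_type, Fintype.sum_prod_type, sum_add_distrib]

lemma corona_adj_inr_mem_coronaBlock {p : V × W} {x : V ⊕ V × W}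
    (h : (corona G H).Adj (.inr p) x) : x ∈ coronaBlock p.1 := by
  rcases corona_adj_inr h with rfl | ⟨w, rfl⟩ <;> simp [coronaBlock]

lemma IsItalian.two_le_sum_coronaBlock [Fintype V] (hW : 2 ≤ Fintype.card W)
    {f : V ⊕ V × W → ℕ} (hf : IsItalian (corona G H) f) (v : V) :
    2 ≤ ∑ x ∈ coronaBlock v, f x := by
  by_contra! hlt
  have hcopy : ∑ w, f (.inr (v, w)) < ∑ _w : W, 1 := by
    rw [sum_coronaBlock] at hlt
    simp only [sum_const, card_univ, smul_eq_mul, mul_one]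
    omega
  obtain ⟨w, -, hw⟩ := exists_lt_of_sum_lt hcopy
  exact lt_irrefl 2 <| (hf.two_le_sum_of_adj_mem (Nat.lt_one_iff.1 hw) fun _ hy =>
    corona_adj_inr_mem_coronaBlock hy).trans_lt hlt

lemma isItalian_corona_two_zero [Fintype V] :
    IsItalian (corona G H) (Sum.elim (fun _ => 2) fun _ => 0) := by
  refine ⟨fun x => by cases x <;> simp, fun x hx => ?_⟩
  rcases x with v | p
  · simp at hx
  · exact single_le_sum (f := Sum.elim (fun _ => 2) fun _ => 0) (fun _ _ => Nat.zero_le _)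
      (mem_filter.2 ⟨mem_univ _, corona_adj_inr_inl p⟩)

end Corona

theorem italian_corona_eq_two_mul {V W : Type*} [Fintype V] [Fintype W]
    (G : SimpleGraph V) (H : SimpleGraph W) (hW : 2 ≤ Fintype.card W) :
    italianDomNumber (corona G H) = 2 * Fintype.card V := by
  apply le_antisymm
  · calc italianDomNumber (corona G H)
        ≤ ∑ x, Sum.elim (fun _ => 2) (fun _ => 0) x := italianDomNumber_le isItalian_corona_two_zero
      _ = 2 * Fintype.card V := by simp [Fintype.sum_sum_type, mul_comm]
  · obtain ⟨f, hf, hsum⟩ := exists_isItalian_sum_eq_italianDomNumber (corona G H)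
    calc 2 * Fintype.card V = ∑ _v : V, 2 := by simp [mul_comm]
      _ ≤ ∑ v, ∑ x ∈ coronaBlock v, f x := sum_le_sum fun v _ => hf.two_le_sum_coronaBlock hW v
      _ = italianDomNumber (corona G H) := (sum_eq_sum_coronaBlock f).symm.trans hsum
end

section
/- Let G be a graph, u ∈ V(G), and let H be the graph obtained from G by adding a new vertex u′ that is a false twin of u (adjacent to exactly the neighbors of u, and not to u). Then γ_I(H) = γ_I(G) or γ_I(H) = γ_I(G) + 1. -/
open SimpleGraph Finset
open scoped Classical

/-- The graph obtained from `G` by adding a new vertex (the `none` vertex) which is a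
false twin of `u`: adjacent exactly to the neighbors of `u`, and not to `u`. -/
def addFalseTwin {V : Type*} (G : SimpleGraph V) (u : V) : SimpleGraph (Option V) :=
  SimpleGraph.fromRel (fun a b =>
    match a, b with
    | some x, some y => G.Adj x y
    | some x, none => G.Adj u x
    | none, some y => G.Adj u y
    | none, none => False)

section Aux
variable {V : Type*} [Fintype V] (G : SimpleGraph V) (u : V)

lemma italian_nonempty :
    {w | ∃ f : V → ℕ, IsItalian G f ∧ ∑ v, f v = w}.Nonempty :=
  ⟨_, fun _ => 2, ⟨fun _ => le_rfl, fun _ h => by simp at h⟩, rfl⟩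

lemma aft_adj_some_some (v w : V) :
    (addFalseTwin G u).Adj (some v) (some w) ↔ G.Adj v w := by
  constructor
  · rintro ⟨-, h | h⟩
    · exact h
    · exact h.symm
  · intro h
    exact ⟨by simpa using h.ne, Or.inl h⟩

lemma aft_adj_some_none (v : V) :
    (addFalseTwin G u).Adj (some v) none ↔ G.Adj u v := by
  constructor
  · rintro ⟨-, h | h⟩ <;> exact h
  · intro h
    exact ⟨by simp, Or.inl h⟩

lemma aft_sum_nbr (v : V) (g : Option V → ℕ) :
    ∑ x ∈ Finset.univ.filter (fun w => (addFalseTwin G u).Adj (some v) w), g x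
      = (if G.Adj u v then g none else 0)
        + ∑ w ∈ Finset.univ.filter (fun w => G.Adj v w), g (some w) := by
  rw [Finset.sum_filter, Fintype.sum_option, Finset.sum_filter]
  congr 1
  · simp [aft_adj_some_none]
  · refine Finset.sum_congr rfl fun w _ => ?_
    simp [aft_adj_some_some]

end Aux

theorem italian_addFalseTwin {V : Type*} [Fintype V] (G : SimpleGraph V) (u : V) :
    italianDomNumber (addFalseTwin G u) = italianDomNumber G ∨
      italianDomNumber (addFalseTwin G u) = italianDomNumber G + 1 := by
  -- Lower bound: γG ≤ γH
  have hlow : italianDomNumber G ≤ italianDomNumber (addFalseTwin G u) := by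
    obtain ⟨g, hg, hgsum⟩ := Nat.sInf_mem (italian_nonempty (addFalseTwin G u))
    obtain ⟨f, hf_def⟩ : ∃ f : V → ℕ,
        f = fun v => if v = u then min 2 (g (some u) + g none) else g (some v) := ⟨_, rfl⟩
    have hfI : IsItalian G f := by
      constructor
      · intro v
        by_cases h : v = u
        · simp [hf_def, h]
        · simpa [hf_def, h] using hg.1 (some v)
      · intro v hv0
        by_cases hvu : v = u
        · subst hvu
          have h0 : g (some v) = 0 ∧ g none = 0 := by
            have := hv0
            simp only [hf_def, if_pos rfl] at this
            clear hgsum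
            rcases min_choice 2 (g (some v) + g none) with h | h <;> omega
          have h2 := hg.2 (some v) h0.1
          rw [aft_sum_nbr] at h2
          rw [if_neg (G.irrefl)] at h2
          calc 2 ≤ ∑ w ∈ Finset.univ.filter (fun w => G.Adj v w), g (some w) := by clear hgsum; omega
            _ = ∑ w ∈ Finset.univ.filter (fun w => G.Adj v w), f w := by
                refine Finset.sum_congr rfl fun w hw => ?_
                have hwv : w ≠ v := (G.ne_of_adj (Finset.mem_filter.1 hw).2).symm
                simp [hf_def, hwv]
        · have h0 : g (some v) = 0 := by simpa [hf_def, hvu] using hv0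
          have h2 := hg.2 (some v) h0
          rw [aft_sum_nbr] at h2
          by_cases hadj : G.Adj v u
          · have huv : G.Adj u v := hadj.symm
            rw [if_pos huv] at h2
            have humem : u ∈ Finset.univ.filter (fun w => G.Adj v w) := by
              simp [hadj]
            rw [← Finset.add_sum_erase _ _ humem] at h2 ⊢
            have herase : ∑ w ∈ (Finset.univ.filter (fun w => G.Adj v w)).erase u, f w
                = ∑ w ∈ (Finset.univ.filter (fun w => G.Adj v w)).erase u, g (some w) := by
              refine Finset.sum_congr rfl fun w hw => ?_
              have hwu : w ≠ u := Finset.ne_of_mem_erase hw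
              simp [hf_def, hwu]
            rw [herase]
            have hfu : f u = min 2 (g (some u) + g none) := by simp [hf_def]
            rw [hfu]
            clear hgsum
            rcases min_choice 2 (g (some u) + g none) with h | h <;> omega
          · have huv : ¬ G.Adj u v := fun h => hadj h.symm
            rw [if_neg huv] at h2
            calc 2 ≤ ∑ w ∈ Finset.univ.filter (fun w => G.Adj v w), g (some w) := by clear hgsum; omega
              _ = ∑ w ∈ Finset.univ.filter (fun w => G.Adj v w), f w := by
                  refine Finset.sum_congr rfl fun w hw => ?_
                  have hwu : w ≠ u := by
                    rintro rfl
                    exact hadj (Finset.mem_filter.1 hw).2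
                  simp [hf_def, hwu]
    have hwt : ∑ v, f v ≤ ∑ x : Option V, g x := by
      have hle : ∀ v, f v ≤ g (some v) + (if v = u then g none else 0) := by
        intro v
        by_cases h : v = u
        · subst h
          simp only [hf_def, if_pos rfl]
          exact (min_le_right _ _)
        · simp [hf_def, h]
      calc ∑ v, f v ≤ ∑ v, (g (some v) + (if v = u then g none else 0)) :=
            Finset.sum_le_sum fun v _ => hle v
        _ = (∑ v, g (some v)) + g none := by
            rw [Finset.sum_add_distrib, Finset.sum_ite_eq' Finset.univ u
              (fun _ => g none), if_pos (Finset.mem_univ u)]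
        _ = ∑ x : Option V, g x := by rw [Fintype.sum_option]; clear hgsum; omega
    calc italianDomNumber G ≤ ∑ v, f v := Nat.sInf_le ⟨f, hfI, rfl⟩
      _ ≤ ∑ x : Option V, g x := hwt
      _ = italianDomNumber (addFalseTwin G u) := hgsum
  -- Upper bound: γH ≤ γG + 1
  have hup : italianDomNumber (addFalseTwin G u) ≤ italianDomNumber G + 1 := by
    obtain ⟨f, hf, hfsum⟩ := Nat.sInf_mem (italian_nonempty G)
    obtain ⟨g, hg_def⟩ : ∃ g : Option V → ℕ,
        g = fun x => match x with | none => 1 | some v => f v := ⟨_, rfl⟩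
    have hgI : IsItalian (addFalseTwin G u) g := by
      constructor
      · rintro (_ | v)
        · simp [hg_def]
        · simpa [hg_def] using hf.1 v
      · rintro (_ | v) h0
        · simp [hg_def] at h0
        · have h0' : f v = 0 := by simpa [hg_def] using h0
          have h2 := hf.2 v h0'
          rw [aft_sum_nbr]
          have heq : ∑ w ∈ Finset.univ.filter (fun w => G.Adj v w), g (some w)
              = ∑ w ∈ Finset.univ.filter (fun w => G.Adj v w), f w := by simp [hg_def]
          rw [heq]
          clear hfsum
          by_cases h : G.Adj u v <;> simp [h, hg_def] <;> omega
    have : ∑ x : Option V, g x = italianDomNumber G + 1 := by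
      rw [Fintype.sum_option]
      have heq2 : ∑ v, g (some v) = ∑ v, f v := by simp [hg_def]
      rw [heq2, hfsum]
      simp [hg_def, italianDomNumber]
      exact Nat.add_comm 1 _
    exact this ▸ Nat.sInf_le ⟨g, hgI, rfl⟩
  omega
end
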